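/- arXiv:2402.11555 — 3 statements merged into one kernel-verified Lean document; each statement's English description precedes it below -/
import Mathlib

section
/- Let δ > 0 be a real number, let X be a real n×q matrix, let G and L be real n×n matrices, and form the pre-array T = [ X , √δ·(G + (δ/2)·L) , √(δ³/12)·L ] (horizontal concatenation, size n×(q+2n)). Suppose T = W S Vᵀ where W is an orthogonal n×n matrix, S is a diagonal n×n matrix, and V is a (q+2n)×n matrix with orthonormal columns (VᵀV = I_n). Then W S² Wᵀ = X Xᵀ + (δ²/2)·(G Lᵀ + L Gᵀ) + (δ³/3)·L Lᵀ + δ·G Gᵀ; that is, the SVD factors W and S² read off from the pre-array T reconstruct exactly the predicted covariance computed by the conventional IT-1.5 cubature Kalman filter time update. -/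
/-!
Both sides equal `T Tᵀ`. Since `V` has orthonormal columns and `S` is symmetric,
`T Tᵀ = W S Vᵀ V Sᵀ Wᵀ = W S² Wᵀ`. For a column-partitioned matrix, `T Tᵀ` is the sum of the
Gram matrices of the blocks, here `X Xᵀ + δ (G + δ/2 L)(G + δ/2 L)ᵀ + δ³/12 L Lᵀ`; expanding,
the `L Lᵀ` coefficient is `δ³/4 + δ³/12 = δ³/3`.
-/

open Matrix

namespace Matrix

variable {R : Type*} [CommSemiring R] {l m n₁ n₂ : Type*}

theorem mul_transpose_self_eq_of_eq_mul_mul_transpose [Fintype m] [DecidableEq m] [Fintype n₁]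
    {T : Matrix l n₁ R} {W : Matrix l m R} {S : Matrix m m R} {V : Matrix n₁ m R}
    (hV : Vᵀ * V = 1) (hS : S.IsSymm) (hT : T = W * S * Vᵀ) :
    T * Tᵀ = W * S ^ 2 * Wᵀ := by
  rw [hT, transpose_mul, transpose_mul, transpose_transpose, hS.eq, pow_two]
  simp only [Matrix.mul_assoc]
  rw [← Matrix.mul_assoc Vᵀ V, hV, Matrix.one_mul]

theorem fromCols_mul_transpose_fromCols [Fintype n₁] [Fintype n₂]
    (A : Matrix l n₁ R) (B : Matrix l n₂ R) :
    fromCols A B * (fromCols A B)ᵀ = A * Aᵀ + B * Bᵀ := by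
  rw [transpose_fromCols, fromCols_mul_fromRows]

theorem smul_mul_transpose_smul [Fintype n₁] (c : R) (A : Matrix l n₁ R) :
    (c • A) * (c • A)ᵀ = (c * c) • (A * Aᵀ) := by
  rw [transpose_smul, Matrix.smul_mul, Matrix.mul_smul, smul_smul]

end Matrix

theorem it15_svd_equiv_conventional_general (n q : ℕ) (δ : ℝ) (hδ : 0 < δ)
    (X : Matrix (Fin n) (Fin q) ℝ)
    (G L : Matrix (Fin n) (Fin n) ℝ)
    (T : Matrix (Fin n) (Fin q ⊕ (Fin n ⊕ Fin n)) ℝ)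
    (hT : T = fromCols X
      (fromCols (Real.sqrt δ • (G + (δ / 2) • L))
        (Real.sqrt (δ ^ 3 / 12) • L)))
    (W : Matrix (Fin n) (Fin n) ℝ)
    (S : Matrix (Fin n) (Fin n) ℝ) (hS : S.IsDiag)
    (V : Matrix (Fin q ⊕ (Fin n ⊕ Fin n)) (Fin n) ℝ) (hV : Vᵀ * V = 1)
    (hSVD : T = W * S * Vᵀ) :
    W * S ^ 2 * Wᵀ = X * Xᵀ + (δ ^ 2 / 2) • (G * Lᵀ + L * Gᵀ)
      + (δ ^ 3 / 3) • (L * Lᵀ) + δ • (G * Gᵀ) := by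
  calc W * S ^ 2 * Wᵀ = T * Tᵀ :=
        (mul_transpose_self_eq_of_eq_mul_mul_transpose hV hS.isSymm hSVD).symm
    _ = X * Xᵀ + δ • ((G + (δ / 2) • L) * (G + (δ / 2) • L)ᵀ)
          + (δ ^ 3 / 12) • (L * Lᵀ) := by
        rw [hT, fromCols_mul_transpose_fromCols, fromCols_mul_transpose_fromCols,
          smul_mul_transpose_smul, smul_mul_transpose_smul, Real.mul_self_sqrt hδ.le,
          Real.mul_self_sqrt (by positivity), add_assoc]
    _ = _ := by
        simp only [transpose_add, transpose_smul, Matrix.add_mul, Matrix.mul_add,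
          Matrix.smul_mul, Matrix.mul_smul, smul_add]
        module

/-- If the IT-1.5 time-update pre-array `T` has SVD `T = W S Vᵀ`,
then `W S² Wᵀ` equals the conventional IT-1.5 predicted covariance. -/
theorem it15_svd_equiv_conventional (n q : ℕ) (δ : ℝ) (hδ : 0 < δ)
    (X : Matrix (Fin n) (Fin q) ℝ)
    (G L : Matrix (Fin n) (Fin n) ℝ)
    (T : Matrix (Fin n) (Fin q ⊕ (Fin n ⊕ Fin n)) ℝ)
    (hT : T = fromCols X
      (fromCols (Real.sqrt δ • (G + (δ / 2) • L))
        (Real.sqrt (δ ^ 3 / 12) • L)))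
    (W : Matrix (Fin n) (Fin n) ℝ) (hW : Wᵀ * W = 1)
    (S : Matrix (Fin n) (Fin n) ℝ) (hS : S.IsDiag)
    (V : Matrix (Fin q ⊕ (Fin n ⊕ Fin n)) (Fin n) ℝ) (hV : Vᵀ * V = 1)
    (hSVD : T = W * S * Vᵀ) :
    W * S ^ 2 * Wᵀ = X * Xᵀ + (δ ^ 2 / 2) • (G * Lᵀ + L * Gᵀ)
      + (δ ^ 3 / 3) • (L * Lᵀ) + δ • (G * Gᵀ) :=
  it15_svd_equiv_conventional_general n q δ hδ X G L T hT W S hS V hV hSVD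
end

section
/- Let X be a real n×q matrix, Z a real m×q matrix, Q_R a real orthogonal m×m matrix, and D½ a real diagonal m×m matrix with nonnegative diagonal entries; set R = Q_R (D½)² Q_Rᵀ, suppose R_e := Z Zᵀ + R is invertible, and define K = (X Zᵀ) R_e⁻¹. Form the pre-array B = [ X − K Z , K Q_R D½ ] and suppose B = W S Vᵀ where W is an orthogonal n×n matrix, S is a diagonal n×n matrix, and V is a (q+m)×n matrix with orthonormal columns (VᵀV = I_n). Then W S² Wᵀ = X Xᵀ − K R_e Kᵀ; that is, the SVD factors read off from the pre-array B are exactly SVD factors of the conventional posterior error covariance P_{k|k} computed by the conventional cubature Kalman filter measurement update. -/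
/-!
Both sides equal `B Bᵀ`. From the SVD, `B Bᵀ = W S (Vᵀ V) Sᵀ Wᵀ = W S² Wᵀ`, since `V` has
orthonormal columns and the diagonal `S` is symmetric. From the block form, with `L = Q_R D½`
(so that `L Lᵀ = R`), `B Bᵀ = (X - K Z)(X - K Z)ᵀ + K R Kᵀ`; expanding and using the gain equation
`K R_e = X Zᵀ` together with the symmetry of `R_e` collapses this to `X Xᵀ - K R_e Kᵀ`.
-/

open Matrix

variable {α ι κ μ : Type*} [CommRing α]

theorem Matrix.mul_transpose_self_eq_of_eq_mul_mul_transpose_s10 [Fintype ι] [DecidableEq ι]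
    [Fintype κ] {B : Matrix μ κ α} {W : Matrix μ ι α} {S : Matrix ι ι α} {V : Matrix κ ι α}
    (hS : Sᵀ = S) (hV : Vᵀ * V = 1) (hB : B = W * S * Vᵀ) :
    B * Bᵀ = W * S ^ 2 * Wᵀ := by
  subst hB
  calc W * S * Vᵀ * (W * S * Vᵀ)ᵀ = W * S * (Vᵀ * V) * Sᵀ * Wᵀ := by
        simp only [transpose_mul, transpose_transpose, Matrix.mul_assoc]
    _ = W * S ^ 2 * Wᵀ := by rw [hV, hS, Matrix.mul_one, sq, Matrix.mul_assoc W]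

theorem Matrix.fromCols_sub_mul_mul_transpose_of_gain {ν : Type*} [Fintype κ] [Fintype μ]
    [Fintype ν] {X : Matrix ι κ α} {Z : Matrix μ κ α} {L : Matrix μ ν α} {K : Matrix ι μ α}
    (hK : K * (Z * Zᵀ + L * Lᵀ) = X * Zᵀ) :
    fromCols (X - K * Z) (K * L) * (fromCols (X - K * Z) (K * L))ᵀ
      = X * Xᵀ - K * (Z * Zᵀ + L * Lᵀ) * Kᵀ := by
  set Re := Z * Zᵀ + L * Lᵀ
  have hRe : Reᵀ = Re := by simp [Re, transpose_add]
  have hXZK : X * Zᵀ * Kᵀ = K * Re * Kᵀ := by rw [hK]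
  have hKZX : K * Z * Xᵀ = K * Re * Kᵀ := by
    rw [Matrix.mul_assoc, Matrix.mul_assoc, ← hRe, ← transpose_mul, hK, transpose_mul,
      transpose_transpose]
  rw [transpose_fromCols, fromCols_mul_fromRows]
  calc (X - K * Z) * (X - K * Z)ᵀ + K * L * (K * L)ᵀ
      = X * Xᵀ - K * Z * Xᵀ - X * Zᵀ * Kᵀ + K * Re * Kᵀ := by
        simp only [Re, transpose_sub, transpose_mul, Matrix.sub_mul, Matrix.mul_sub,
          Matrix.mul_add, Matrix.add_mul, Matrix.mul_assoc]
        abel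
    _ = X * Xᵀ - K * Re * Kᵀ := by rw [hXZK, hKZX]; abel

theorem posterior_svd_equiv_conventional_general (n m q : ℕ)
    (X : Matrix (Fin n) (Fin q) ℝ) (Z : Matrix (Fin m) (Fin q) ℝ)
    (QR Dhalf : Matrix (Fin m) (Fin m) ℝ)
    (hDhalf : Dhalf.IsDiag)
    (R : Matrix (Fin m) (Fin m) ℝ) (hR : R = QR * (Dhalf * Dhalf) * QRᵀ)
    (Re : Matrix (Fin m) (Fin m) ℝ) (hRe : Re = Z * Zᵀ + R)
    (hReInv : IsUnit Re)
    (K : Matrix (Fin n) (Fin m) ℝ) (hK : K = (X * Zᵀ) * Re⁻¹)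
    (B : Matrix (Fin n) (Fin q ⊕ Fin m) ℝ)
    (hB : B = fromCols (X - K * Z) (K * QR * Dhalf))
    (W S : Matrix (Fin n) (Fin n) ℝ)
    (hS : S.IsDiag)
    (V : Matrix (Fin q ⊕ Fin m) (Fin n) ℝ) (hV : Vᵀ * V = 1)
    (hSVD : B = W * S * Vᵀ) :
    W * S ^ 2 * Wᵀ = X * Xᵀ - K * Re * Kᵀ := by
  have hR_sq : R = QR * Dhalf * (QR * Dhalf)ᵀ := by
    rw [hR, transpose_mul, hDhalf.isSymm.eq]; simp only [Matrix.mul_assoc]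
  have hRe_sq : Re = Z * Zᵀ + QR * Dhalf * (QR * Dhalf)ᵀ := by rw [hRe, hR_sq]
  have hgain : K * Re = X * Zᵀ := by
    rw [hK, nonsing_inv_mul_cancel_right _ _ ((isUnit_iff_isUnit_det Re).mp hReInv)]
  rw [← mul_transpose_self_eq_of_eq_mul_mul_transpose_s10 hS.isSymm.eq hV hSVD, hB,
    Matrix.mul_assoc K]
  rw [hRe_sq] at hgain ⊢
  exact fromCols_sub_mul_mul_transpose_of_gain hgain

/-- If the posterior pre-array `B = [X − K Z, K Q_R D½]` has SVD
`B = W S Vᵀ`, then `W S² Wᵀ` equals the conventional posterior covariance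
`X Xᵀ − K R_e Kᵀ`. -/
theorem posterior_svd_equiv_conventional (n m q : ℕ)
    (X : Matrix (Fin n) (Fin q) ℝ) (Z : Matrix (Fin m) (Fin q) ℝ)
    (QR Dhalf : Matrix (Fin m) (Fin m) ℝ)
    (hQR : QRᵀ * QR = 1) (hDhalf : Dhalf.IsDiag) (hDpos : ∀ i, 0 ≤ Dhalf i i)
    (R : Matrix (Fin m) (Fin m) ℝ) (hR : R = QR * (Dhalf * Dhalf) * QRᵀ)
    (Re : Matrix (Fin m) (Fin m) ℝ) (hRe : Re = Z * Zᵀ + R)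
    (hReInv : IsUnit Re)
    (K : Matrix (Fin n) (Fin m) ℝ) (hK : K = (X * Zᵀ) * Re⁻¹)
    (B : Matrix (Fin n) (Fin q ⊕ Fin m) ℝ)
    (hB : B = fromCols (X - K * Z) (K * QR * Dhalf))
    (W S : Matrix (Fin n) (Fin n) ℝ)
    (hW : Wᵀ * W = 1) (hS : S.IsDiag)
    (V : Matrix (Fin q ⊕ Fin m) (Fin n) ℝ) (hV : Vᵀ * V = 1)
    (hSVD : B = W * S * Vᵀ) :
    W * S ^ 2 * Wᵀ = X * Xᵀ - K * Re * Kᵀ :=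
  posterior_svd_equiv_conventional_general n m q X Z QR Dhalf hDhalf R hR Re hRe hReInv K hK B hB W
    S hS V hV hSVD
end

section
/- For n ≥ 1, let μ be the standard Gaussian measure on ℝⁿ (the product of n one-dimensional standard normal distributions N(0,1)). Then for every polynomial p in n real variables of total degree at most 3, the third-degree spherical-radial cubature rule is exact: ∫ p(x) dμ(x) = (1/(2n))·∑_{i=1}^{n} [ p(√n·e_i) + p(−√n·e_i) ], where e_i is the i-th standard unit coordinate vector in ℝⁿ. -/
open MeasureTheory ProbabilityTheory Real
open scoped ENNReal NNReal

namespace CubatureAux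

noncomputable def gpdf : ℝ → NNReal := fun x => Real.toNNReal (gaussianPDFReal 0 1 x)

lemma gpdf_meas : Measurable gpdf :=
  (measurable_gaussianPDFReal 0 1).real_toNNReal

lemma gpdf_coe (x : ℝ) : (gpdf x : ℝ) = gaussianPDFReal 0 1 x :=
  Real.coe_toNNReal _ (gaussianPDFReal_nonneg 0 1 x)

lemma gauss_eq : gaussianReal 0 1 = volume.withDensity (fun x => (gpdf x : ℝ≥0∞)) := by
  rw [gaussianReal_of_var_ne_zero _ one_ne_zero]
  rfl

lemma pdf_eq (x : ℝ) :
    gaussianPDFReal 0 1 x = (√(2 * π))⁻¹ * rexp (-(1/2) * x ^ 2) := by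
  simp only [gaussianPDFReal, NNReal.coe_one, mul_one, sub_zero]
  rw [show -x ^ 2 / 2 = -(1/2) * x ^ 2 by ring]

lemma integrable_pdf_mul_pow (k : ℕ) :
    Integrable (fun x : ℝ => gaussianPDFReal 0 1 x * x ^ k) := by
  have h := integrable_rpow_mul_exp_neg_mul_sq (b := (1:ℝ)/2) (by norm_num)
    (s := (k : ℝ)) (lt_of_lt_of_le neg_one_lt_zero (Nat.cast_nonneg k))
  simp_rw [Real.rpow_natCast] at h
  refine (h.const_mul ((√(2 * π))⁻¹)).congr ?_
  filter_upwards with x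
  rw [pdf_eq]
  ring

lemma integrable_pow_gauss (k : ℕ) :
    Integrable (fun x : ℝ => x ^ k) (gaussianReal 0 1) := by
  rw [gauss_eq, integrable_withDensity_iff_integrable_smul gpdf_meas]
  refine (integrable_pdf_mul_pow k).congr ?_
  filter_upwards with x
  rw [NNReal.smul_def, smul_eq_mul, gpdf_coe]

noncomputable def M (k : ℕ) : ℝ := ∫ x, x ^ k ∂(gaussianReal 0 1)

lemma M_eq (k : ℕ) : M k = ∫ x : ℝ, gaussianPDFReal 0 1 x * x ^ k := by
  rw [M, gauss_eq, integral_withDensity_eq_integral_smul gpdf_meas]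
  congr 1
  funext x
  rw [NNReal.smul_def, smul_eq_mul, gpdf_coe]

lemma M_zero : M 0 = 1 := by
  simp [M]

lemma M_odd (k : ℕ) (hk : Odd k) : M k = 0 := by
  have h1 : ∫ x : ℝ, gaussianPDFReal 0 1 (-x) * (-x) ^ k
      = ∫ x : ℝ, gaussianPDFReal 0 1 x * x ^ k :=
    integral_neg_eq_self (fun x : ℝ => gaussianPDFReal 0 1 x * x ^ k) volume
  have h2 : (fun x : ℝ => gaussianPDFReal 0 1 (-x) * (-x) ^ k)
      = fun x : ℝ => -(gaussianPDFReal 0 1 x * x ^ k) := by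
    funext x
    rw [hk.neg_pow, pdf_eq, pdf_eq, neg_sq]
    ring
  rw [h2, integral_neg] at h1
  rw [M_eq]
  linarith

lemma M_two : M 2 = 1 := by
  rw [M_eq]
  have h1 : (fun x : ℝ => gaussianPDFReal 0 1 x * x ^ 2)
      = fun x : ℝ => (√(2 * π))⁻¹ * ((fun t : ℝ => t ^ 2 * rexp (-(1/2) * t ^ 2)) |x|) := by
    funext x
    rw [pdf_eq]
    simp only [sq_abs]
    ring
  have habs : ∫ x : ℝ, (fun t : ℝ => t ^ 2 * rexp (-(1/2) * t ^ 2)) |x|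
      = 2 * ∫ x in Set.Ioi (0:ℝ), x ^ 2 * rexp (-(1/2) * x ^ 2) :=
    integral_comp_abs (f := fun t : ℝ => t ^ 2 * rexp (-(1/2) * t ^ 2))
  rw [h1, integral_const_mul, habs]
  have h2 : ∫ x in Set.Ioi (0:ℝ), x ^ 2 * rexp (-(1/2) * x ^ 2)
      = ((1:ℝ)/2) ^ (-((2:ℝ) + 1) / 2) * (1 / 2) * Real.Gamma (((2:ℝ) + 1) / 2) := by
    have h := integral_rpow_mul_exp_neg_mul_rpow (p := (2:ℝ)) (q := (2:ℝ)) (b := (1:ℝ)/2)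
      (by norm_num) (by norm_num) (by norm_num)
    rw [← h]
    refine setIntegral_congr_fun measurableSet_Ioi (fun x hx => ?_)
    have h2' : x ^ (2:ℝ) = x ^ (2:ℕ) := by
      rw [show (2:ℝ) = ((2:ℕ):ℝ) by norm_num, Real.rpow_natCast]
    rw [h2']
  rw [h2]
  have hG : Real.Gamma (((2:ℝ) + 1) / 2) = √π / 2 := by
    rw [show ((2:ℝ) + 1) / 2 = 1/2 + 1 by norm_num, Real.Gamma_add_one (by norm_num),
      Real.Gamma_one_half_eq]
    ring
  have hA : ((1:ℝ)/2) ^ (-((2:ℝ) + 1) / 2) = 2 * √2 := by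
    rw [show -((2:ℝ) + 1) / 2 = -(3/2) by norm_num, one_div,
      Real.inv_rpow (by norm_num : (0:ℝ) ≤ 2), Real.rpow_neg (by norm_num), inv_inv,
      show (3:ℝ)/2 = 1 + 1/2 by norm_num, Real.rpow_add (by norm_num), Real.rpow_one,
      ← Real.sqrt_eq_rpow]
  rw [hG, hA, Real.sqrt_mul (by norm_num : (0:ℝ) ≤ 2)]
  have h2pos : (0:ℝ) < √2 := Real.sqrt_pos.mpr (by norm_num)
  have hπpos : (0:ℝ) < √π := Real.sqrt_pos.mpr Real.pi_pos
  field_simp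

/-- The key combinatorial identity for a single monomial exponent `d`. -/
lemma key {n : ℕ} (hn : 1 ≤ n) (d : Fin n →₀ ℕ) (hd : ∑ j, d j ≤ 3) :
    ∏ i, M (d i) = (1 / (2 * n : ℝ)) * ∑ i : Fin n,
      ((∏ j, ((Real.sqrt n • (Pi.single i 1 : Fin n → ℝ)) j) ^ d j) +
       (∏ j, ((-(Real.sqrt n • (Pi.single i 1 : Fin n → ℝ))) j) ^ d j)) := by
  have hnR : (0:ℝ) < n := by exact_mod_cast hn
  have hne : (2 * (n:ℝ)) ≠ 0 := by positivity
  have hs : ∀ (i j : Fin n), ((Real.sqrt n • (Pi.single i 1 : Fin n → ℝ)) j)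
      = if j = i then Real.sqrt n else 0 := by
    intro i j
    by_cases h : j = i
    · subst h; simp
    · simp [Pi.single_eq_of_ne h, h]
  have hs' : ∀ (i j : Fin n), ((-(Real.sqrt n • (Pi.single i 1 : Fin n → ℝ))) j)
      = if j = i then -Real.sqrt n else 0 := by
    intro i j
    rw [Pi.neg_apply, hs]
    by_cases h : j = i <;> simp [h]
  simp_rw [hs, hs']
  by_cases h0 : d = 0
  · subst h0
    simp only [Finsupp.coe_zero, Pi.zero_apply, pow_zero, Finset.prod_const_one, M_zero]
    rw [Finset.sum_const, Finset.card_univ, Fintype.card_fin]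
    field_simp
    all_goals ring
  · have hSne : d.support.Nonempty := Finsupp.support_nonempty_iff.mpr h0
    by_cases hcard : d.support.card = 1
    · obtain ⟨i0, hi0⟩ := Finset.card_eq_one.mp hcard
      have hz : ∀ j : Fin n, j ≠ i0 → d j = 0 := by
        intro j hj
        by_contra hc
        have : j ∈ d.support := Finsupp.mem_support_iff.mpr hc
        rw [hi0, Finset.mem_singleton] at this
        exact hj this
      have hm0 : d i0 ≠ 0 := by
        have : i0 ∈ d.support := by rw [hi0]; exact Finset.mem_singleton_self i0
        exact Finsupp.mem_support_iff.mp this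
      have hm3 : d i0 ≤ 3 := le_trans (Finset.single_le_sum (fun j _ => Nat.zero_le _)
        (Finset.mem_univ i0)) hd
      -- LHS
      have hL : ∏ i, M (d i) = M (d i0) := by
        refine Finset.prod_eq_single i0 (fun j _ hj => ?_) (fun h => absurd (Finset.mem_univ _) h)
        rw [hz j hj, M_zero]
      -- RHS
      have hA : ∏ j, (if j = i0 then Real.sqrt n else 0) ^ d j = (Real.sqrt n) ^ d i0 := by
        rw [Finset.prod_eq_single i0 (fun j _ hj => by rw [hz j hj, pow_zero])
          (fun h => absurd (Finset.mem_univ i0) h), if_pos rfl]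
      have hB : ∏ j, (if j = i0 then -Real.sqrt n else 0) ^ d j = (-Real.sqrt n) ^ d i0 := by
        rw [Finset.prod_eq_single i0 (fun j _ hj => by rw [hz j hj, pow_zero])
          (fun h => absurd (Finset.mem_univ i0) h), if_pos rfl]
      have hzero : ∀ i : Fin n, i ≠ i0 → ((∏ j, (if j = i then Real.sqrt n else 0) ^ d j)
          + ∏ j, (if j = i then -Real.sqrt n else 0) ^ d j) = 0 := by
        intro i hi
        have hz1 : (if i0 = i then Real.sqrt n else 0) ^ d i0 = 0 := by
          rw [if_neg (fun h => hi h.symm), zero_pow hm0]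
        have hz2 : (if i0 = i then -Real.sqrt n else 0) ^ d i0 = 0 := by
          rw [if_neg (fun h => hi h.symm), zero_pow hm0]
        rw [Finset.prod_eq_zero (Finset.mem_univ i0) hz1,
          Finset.prod_eq_zero (Finset.mem_univ i0) hz2, add_zero]
      have hR : ∑ i : Fin n, ((∏ j, (if j = i then Real.sqrt n else 0) ^ d j)
          + ∏ j, (if j = i then -Real.sqrt n else 0) ^ d j)
          = (Real.sqrt n) ^ d i0 + (-Real.sqrt n) ^ d i0 := by
        rw [Finset.sum_eq_single i0 (fun i _ hi => hzero i hi)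
          (fun h => absurd (Finset.mem_univ i0) h), hA, hB]
      rw [hL, hR]
      have hsq : (Real.sqrt n) ^ 2 = (n:ℝ) := Real.sq_sqrt hnR.le
      interval_cases h : d i0
      · exact absurd rfl hm0
      · rw [M_odd 1 (by decide)]
        ring
      · rw [M_two]
        rw [show ((-Real.sqrt n) ^ 2 : ℝ) = (Real.sqrt n) ^ 2 by ring, hsq]
        field_simp
        all_goals ring
      · rw [M_odd 3 (by decide)]
        rw [show ((-Real.sqrt n) ^ 3 : ℝ) = -((Real.sqrt n) ^ 3) by ring]
        ring
    · -- support has at least two elements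
      have h2 : 2 ≤ d.support.card := by
        have h1 : d.support.card ≠ 0 := by
          simpa [Finset.card_eq_zero] using Finset.nonempty_iff_ne_empty.mp hSne
        omega
      -- LHS = 0 : some index has exponent exactly 1
      have hex : ∃ i ∈ d.support, d i = 1 := by
        by_contra hc
        push_neg at hc
        have hall : ∀ i ∈ d.support, 2 ≤ d i := by
          intro i hi
          have h1 := Finsupp.mem_support_iff.mp hi
          have h2' := hc i hi
          omega
        have hsum : d.support.card • 2 ≤ ∑ i ∈ d.support, d i :=
          Finset.card_nsmul_le_sum _ _ _ hall
        simp only [smul_eq_mul] at hsum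
        have hsub : ∑ i ∈ d.support, d i ≤ ∑ i, d i :=
          Finset.sum_le_sum_of_subset (Finset.subset_univ _)
        omega
      obtain ⟨i1, hi1, hdi1⟩ := hex
      have hL : ∏ i, M (d i) = 0 :=
        Finset.prod_eq_zero (Finset.mem_univ i1) (by rw [hdi1, M_odd 1 (by decide)])
      have hR : ∀ i : Fin n, ((∏ j, (if j = i then Real.sqrt n else 0) ^ d j)
          + ∏ j, (if j = i then -Real.sqrt n else 0) ^ d j) = 0 := by
        intro i
        obtain ⟨j, hjS, hji⟩ := Finset.exists_mem_ne (s := d.support) (by omega) i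
        have hdj : d j ≠ 0 := Finsupp.mem_support_iff.mp hjS
        rw [Finset.prod_eq_zero (Finset.mem_univ j) (by rw [if_neg hji, zero_pow hdj]),
          Finset.prod_eq_zero (Finset.mem_univ j) (by rw [if_neg hji, zero_pow hdj]), add_zero]
      rw [hL, Finset.sum_congr rfl (fun i _ => hR i), Finset.sum_const, smul_zero, mul_zero]

end CubatureAux

open CubatureAux

theorem cubature_rule_third_degree_exact (n : ℕ) (hn : 1 ≤ n)
    (μ : Measure (Fin n → ℝ))
    (hμ : μ = Measure.pi fun _ : Fin n => gaussianReal 0 1)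
    (p : MvPolynomial (Fin n) ℝ) (hp : p.totalDegree ≤ 3) :
    ∫ x, MvPolynomial.eval x p ∂μ =
      (1 / (2 * n : ℝ)) * ∑ i : Fin n,
        (MvPolynomial.eval (Real.sqrt n • (Pi.single i 1 : Fin n → ℝ)) p +
          MvPolynomial.eval (-(Real.sqrt n • (Pi.single i 1 : Fin n → ℝ))) p) := by
  subst hμ
  -- degree bound per monomial
  have hdeg : ∀ d ∈ p.support, ∑ j, d j ≤ 3 := by
    intro d hd
    have h1 : (d.sum fun _ e => e) ≤ p.totalDegree := MvPolynomial.le_totalDegree hd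
    have h2 : (d.sum fun _ e => e) = ∑ j, d j := Finsupp.sum_fintype _ _ (fun _ => rfl)
    omega
  -- integrability and Fubini
  have hInt : ∀ d : Fin n →₀ ℕ, Integrable (fun x : Fin n → ℝ => ∏ i, x i ^ d i)
      (Measure.pi fun _ : Fin n => gaussianReal 0 1) := by
    intro d
    letI : MeasureSpace ℝ := ⟨gaussianReal 0 1⟩
    haveI : IsFiniteMeasure (volume : Measure ℝ) :=
      inferInstanceAs (IsFiniteMeasure (gaussianReal 0 1))
    exact Integrable.fin_nat_prod (f := fun i (t : ℝ) => t ^ d i)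
      (fun i => integrable_pow_gauss (d i))
  have hFub : ∀ d : Fin n →₀ ℕ,
      ∫ x : Fin n → ℝ, ∏ i, x i ^ d i ∂(Measure.pi fun _ : Fin n => gaussianReal 0 1)
        = ∏ i, M (d i) := by
    intro d
    letI : MeasureSpace ℝ := ⟨gaussianReal 0 1⟩
    haveI : IsFiniteMeasure (volume : Measure ℝ) :=
      inferInstanceAs (IsFiniteMeasure (gaussianReal 0 1))
    exact integral_fin_nat_prod_eq_prod (f := fun i (t : ℝ) => t ^ d i)
  -- expand LHS
  have hL : ∫ x, MvPolynomial.eval x p ∂(Measure.pi fun _ : Fin n => gaussianReal 0 1)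
      = ∑ d ∈ p.support, MvPolynomial.coeff d p * ∏ i, M (d i) := by
    have he : (fun x : Fin n → ℝ => MvPolynomial.eval x p)
        = fun x => ∑ d ∈ p.support, MvPolynomial.coeff d p * ∏ i, x i ^ d i := by
      funext x
      rw [MvPolynomial.eval_eq']
    rw [he, integral_finset_sum _ (fun d _ => (hInt d).const_mul _)]
    refine Finset.sum_congr rfl (fun d _ => ?_)
    rw [integral_const_mul, hFub]
  rw [hL]
  -- expand RHS
  simp_rw [MvPolynomial.eval_eq', ← Finset.sum_add_distrib, ← mul_add]
  rw [Finset.sum_comm]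
  simp_rw [← Finset.mul_sum]
  rw [Finset.mul_sum]
  refine Finset.sum_congr rfl (fun d hd => ?_)
  rw [key hn d (hdeg d hd)]
  ring
end
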